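/- For atomic steps a, b and commands c, d, assuming interchange, conjunctivity, isolation, and the axiom a^∞ ∥ b^∞ = (a∥b)^∞: a^ω;c ∥ b^ω;d = (a∥b)^ω ; ((c∥d) ⊓ (c ∥ b;b^ω;d) ⊓ (a;a^ω;c ∥ d)). -/

import Mathlib

/-- A Concurrent Refinement Algebra over a complete distributive lattice of
commands, ordered by refinement (`⊓` = nondeterministic choice, `⊥` = abort,
`⊤` = magic), with sequential composition `seq` (identity `nil`),
synchronous parallel `par`, weak conjunction `conj`, a Boolean-style
sub-lattice of atomic steps `Atomic` (with `eps` the environment-step identity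
of `par`) and a sub-lattice of tests `Test`. -/
structure CRA (C : Type*) [CompleteDistribLattice C] where
  seq : C → C → C
  par : C → C → C
  conj : C → C → C
  nil : C
  eps : C
  Atomic : C → Prop
  Test : C → Prop
  seq_assoc : ∀ a b c, seq (seq a b) c = seq a (seq b c)
  seq_nil : ∀ c, seq c nil = c
  nil_seq : ∀ c, seq nil c = c
  seq_mono_left : ∀ d : C, Monotone fun c => seq c d
  seq_mono_right : ∀ c : C, Monotone (seq c)
  top_seq : ∀ c, seq ⊤ c = ⊤
  bot_seq : ∀ c, seq ⊥ c = ⊥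
  /-- sequential composition distributes over arbitrary choices on the right -/
  seq_sInf_distrib : ∀ (S : Set C) (d : C), seq (sInf S) d = ⨅ c ∈ S, seq c d
  par_assoc : ∀ a b c, par (par a b) c = par a (par b c)
  par_comm : ∀ a b, par a b = par b a
  /-- parallel distributes over arbitrary choices -/
  par_sInf_distrib : ∀ (c : C) (S : Set C), par c (sInf S) = ⨅ d ∈ S, par c d
  nil_par_nil : par nil nil = nil
  atomic_par : ∀ a b, Atomic a → Atomic b → Atomic (par a b)
  /-- synchronous interchange law for atomic steps -/
  interchange : ∀ a b c d, Atomic a → Atomic b →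
    par (seq a c) (seq b d) = seq (par a b) (par c d)
  par_atomic_seq_nil : ∀ a c, Atomic a → par (seq a c) nil = ⊤
  atomic_eps : Atomic eps
  /-- `eps` is the identity of parallel on atomic steps -/
  eps_par_atomic : ∀ a, Atomic a → par eps a = a
  conj_assoc : ∀ a b c, conj (conj a b) c = conj a (conj b c)
  conj_comm : ∀ a b, conj a b = conj b a
  conj_idem : ∀ a, conj a a = a
  conj_bot : ∀ c, conj c ⊥ = ⊥
  conj_atomic : ∀ a b, Atomic a → Atomic b → conj a b = a ⊔ b
  conj_test : ∀ t t', Test t → Test t' → conj t t' = t ⊔ t'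
  conj_interchange : ∀ a b c d, Atomic a → Atomic b →
    conj (seq a c) (seq b d) = seq (conj a b) (conj c d)
  conj_atomic_seq_nil : ∀ a c, Atomic a → conj (seq a c) nil = ⊤
  conj_sInf_distrib : ∀ (c : C) (S : Set C), S.Nonempty →
    conj c (sInf S) = ⨅ d ∈ S, conj c d
  atomic_conj : ∀ a b, Atomic a → Atomic b → Atomic (conj a b)
  test_nil : Test nil
  test_nil_le : ∀ t, Test t → nil ≤ t
  test_seq_par_interchange : ∀ t t' c d, Test t → Test t' →
    par (seq t c) (seq t' d) = seq (t ⊔ t') (par c d)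
  conj_test_interchange : ∀ t t' c d, Test t → Test t' →
    conj (seq t c) (seq t' d) = seq (t ⊔ t') (conj c d)

namespace CRA

variable {C : Type*} [CompleteDistribLattice C] (A : CRA C)

/-- possibly infinite iteration `c^ω = μ x. nil ⊓ c;x` -/
def omega (c : C) : C :=
  OrderHom.lfp ⟨fun x => A.nil ⊓ A.seq c x,
    fun _ _ h => inf_le_inf_left _ (A.seq_mono_right c h)⟩

/-- finite iteration `c^* = ν x. nil ⊓ c;x` -/
def star (c : C) : C :=
  OrderHom.gfp ⟨fun x => A.nil ⊓ A.seq c x,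
    fun _ _ h => inf_le_inf_left _ (A.seq_mono_right c h)⟩

/-- infinite iteration `c^∞ = c^ω ; ⊤` -/
def inft (c : C) : C := A.seq (A.omega c) ⊤

/-- finite powers: `c^0 = nil`, `c^(i+1) = c ; c^i` -/
def pow (c : C) : ℕ → C
  | 0 => A.nil
  | n + 1 => A.seq c (pow c n)

end CRA

/-!
Both sides are fixed points of `x ↦ E ⊓ (a ∥ b) ; x`, where `E` is the three-way choice on the
right: the left side by unfolding `a^ω` and `b^ω` and applying interchange, the right side by
unfolding `(a ∥ b)^ω`. Both also lie below `(a ∥ b)^∞`, the left side because of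
`a^∞ ∥ b^∞ = (a ∥ b)^∞`. A generalised isolation law says that for conjunctive `m` the least
fixed point of `x ↦ e ⊓ m ; x` is its greatest fixed point meet `m^∞`, so every fixed point below
`m^∞` is the least one, and the two sides coincide.
-/

namespace CRA

variable {C : Type*} [CompleteDistribLattice C] (A : CRA C)

lemma seq_inf_left (x y d : C) : A.seq (x ⊓ y) d = A.seq x d ⊓ A.seq y d := by
  simpa only [sInf_pair, iInf_pair] using A.seq_sInf_distrib {x, y} d

lemma par_inf_right (x y z : C) : A.par x (y ⊓ z) = A.par x y ⊓ A.par x z := by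
  simpa only [sInf_pair, iInf_pair] using A.par_sInf_distrib x {y, z}

lemma par_inf_left (x y z : C) : A.par (x ⊓ y) z = A.par x z ⊓ A.par y z := by
  rw [A.par_comm, par_inf_right, A.par_comm z, A.par_comm z]

lemma par_mono_right (x : C) : Monotone (A.par x) := fun y z h => by
  rw [← inf_eq_left.mpr h, par_inf_right]
  exact inf_le_right

lemma par_le_par {x x' y y' : C} (hx : x ≤ x') (hy : y ≤ y') :
    A.par x y ≤ A.par x' y' :=
  calc A.par x y ≤ A.par x y' := A.par_mono_right x hy
    _ = A.par y' x := A.par_comm _ _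
    _ ≤ A.par y' x' := A.par_mono_right y' hx
    _ = A.par x' y' := A.par_comm _ _

def iterMap (m e : C) : C →o C :=
  ⟨fun x => e ⊓ A.seq m x, fun _ _ h => inf_le_inf_left _ (A.seq_mono_right m h)⟩

lemma omega_unfold (c : C) : A.nil ⊓ A.seq c (A.omega c) = A.omega c :=
  OrderHom.map_lfp (A.iterMap c A.nil)

lemma omega_seq_unfold (c d : C) : d ⊓ A.seq c (A.seq (A.omega c) d) = A.seq (A.omega c) d := by
  conv_rhs => rw [← omega_unfold]
  rw [seq_inf_left, A.nil_seq, A.seq_assoc]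

lemma seq_inft (m : C) : A.seq m (A.inft m) = A.inft m := by
  conv_rhs => rw [inft, ← omega_seq_unfold, top_inf_eq]
  rfl

lemma omega_seq_le_inft (c d : C) : A.seq (A.omega c) d ≤ A.inft c :=
  A.seq_mono_right _ le_top

lemma inft_le_of_seq_le {m z : C} (h : A.seq m z ≤ z) : A.inft m ≤ z := by
  set μ := OrderHom.lfp ⟨A.seq m, A.seq_mono_right m⟩
  have hμ : A.seq m μ = μ := OrderHom.map_lfp ⟨A.seq m, A.seq_mono_right m⟩
  -- `μ = μ ; ⊥`, so `μ` absorbs the `⊤` in `m^∞ = m^ω ; ⊤`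
  have hμ_bot : A.seq μ ⊥ = μ := by
    refine le_antisymm ?_ (OrderHom.lfp_le _ ?_)
    · simpa only [A.seq_nil] using A.seq_mono_right μ (bot_le : ⊥ ≤ A.nil)
    · change A.seq m (A.seq μ ⊥) ≤ A.seq μ ⊥
      rw [← A.seq_assoc, hμ]
  have hω : A.omega m ≤ μ := OrderHom.lfp_le _ <| by
    change A.nil ⊓ A.seq m μ ≤ μ
    exact hμ.le.trans' inf_le_right
  calc A.inft m ≤ A.seq μ ⊤ := A.seq_mono_left ⊤ hω
    _ = μ := by rw [← hμ_bot, A.seq_assoc, A.bot_seq]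
    _ ≤ z := OrderHom.lfp_le _ h

variable {A}

/-- Generalised isolation; `e = nil` gives `m^ω = m^* ⊓ m^∞`. -/
lemma lfp_iterMap_eq_gfp_inf_inft {m : C}
    (hm : ∀ x y, A.seq m (x ⊓ y) = A.seq m x ⊓ A.seq m y) (e : C) :
    (A.iterMap m e).lfp = (A.iterMap m e).gfp ⊓ A.inft m := by
  set g := (A.iterMap m e).gfp
  have hg : e ⊓ A.seq m g = g := OrderHom.map_gfp (A.iterMap m e)
  refine le_antisymm (le_inf (OrderHom.lfp_le _ (OrderHom.map_gfp _).le) ?_) ?_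
  · refine OrderHom.lfp_le _ (inf_le_right.trans ?_)
    exact (A.seq_inft m).le
  refine OrderHom.le_lfp _ fun w (hw : e ⊓ A.seq m w ≤ w) => ?_
  -- `g ⇨ w` is closed under `m ; -`, hence lies above `m^∞`
  have hclosed : A.seq m (g ⇨ w) ≤ g ⇨ w := by
    rw [le_himp_iff]
    refine le_trans (le_inf ?_ ?_) hw
    · exact inf_le_right.trans (hg.ge.trans inf_le_left)
    · calc A.seq m (g ⇨ w) ⊓ g ≤ A.seq m (g ⇨ w) ⊓ A.seq m g :=
            inf_le_inf_left _ (hg.ge.trans inf_le_right)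
        _ = A.seq m ((g ⇨ w) ⊓ g) := (hm _ _).symm
        _ ≤ A.seq m w := A.seq_mono_right m himp_inf_le
  exact (inf_le_inf_left g (inft_le_of_seq_le A hclosed)).trans inf_himp_le

lemma eq_lfp_iterMap_of_le_inft {m e x : C}
    (hm : ∀ x y, A.seq m (x ⊓ y) = A.seq m x ⊓ A.seq m y)
    (hfix : e ⊓ A.seq m x = x) (hx : x ≤ A.inft m) : x = (A.iterMap m e).lfp := by
  refine le_antisymm ?_ (OrderHom.lfp_le _ hfix.le)
  rw [lfp_iterMap_eq_gfp_inf_inft hm]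
  exact le_inf (OrderHom.le_gfp _ hfix.ge) hx

variable (A)

lemma par_omega_seq_unfold {a b : C} (ha : A.Atomic a) (hb : A.Atomic b) (c d : C) :
    (A.par c d ⊓ A.par c (A.seq b (A.seq (A.omega b) d)) ⊓
        A.par (A.seq a (A.seq (A.omega a) c)) d) ⊓
      A.seq (A.par a b) (A.par (A.seq (A.omega a) c) (A.seq (A.omega b) d)) =
    A.par (A.seq (A.omega a) c) (A.seq (A.omega b) d) := by
  conv_rhs => rw [← omega_seq_unfold A a c, ← omega_seq_unfold A b d]
  rw [par_inf_left, par_inf_right, par_inf_right, A.interchange _ _ _ _ ha hb, inf_assoc]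

lemma par_omega_seq_le_inft {a b : C}
    (hinf : A.par (A.inft a) (A.inft b) = A.inft (A.par a b)) (c d : C) :
    A.par (A.seq (A.omega a) c) (A.seq (A.omega b) d) ≤ A.inft (A.par a b) :=
  hinf ▸ A.par_le_par (A.omega_seq_le_inft a c) (A.omega_seq_le_inft b d)

end CRA

theorem atomic_iteration_either {C : Type*} [CompleteDistribLattice C] (A : CRA C)
    (hconj : ∀ (c : C) (S : Set C), S.Nonempty → A.seq c (sInf S) = ⨅ d ∈ S, A.seq c d) (a b c d : C) (ha : A.Atomic a) (hb : A.Atomic b)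
    (hinf : A.par (A.inft a) (A.inft b) = A.inft (A.par a b)) :
    A.par (A.seq (A.omega a) c) (A.seq (A.omega b) d) =
      A.seq (A.omega (A.par a b))
        (A.par c d ⊓ A.par c (A.seq b (A.seq (A.omega b) d)) ⊓
          A.par (A.seq a (A.seq (A.omega a) c)) d) := by
  have hm : ∀ x y, A.seq (A.par a b) (x ⊓ y) = A.seq (A.par a b) x ⊓ A.seq (A.par a b) y :=
    fun x y => by
      simpa only [sInf_pair, iInf_pair] using hconj _ {x, y} ⟨x, Set.mem_insert x {y}⟩
  rw [CRA.eq_lfp_iterMap_of_le_inft hm (A.par_omega_seq_unfold ha hb c d)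
      (A.par_omega_seq_le_inft hinf c d),
    CRA.eq_lfp_iterMap_of_le_inft hm (A.omega_seq_unfold _ _) (A.omega_seq_le_inft _ _)]
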